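/- If x ∈ ρ-ℝ̃ satisfies |x| ≤ r for all real r > 0 (i.e. x is infinitesimal), then for every representative (x_ε) of x one has lim_{ε→0⁺} x_ε = 0, and conversely. -/

import Mathlib

open Filter Topology Set Asymptotics

/-- `x` is a ρ-moderate net: `x_ε = O(ρ_ε^{-a})` as `ε → 0⁺` for some `a > 0`. -/
def RMod (ρ x : ℝ → ℝ) : Prop :=
  ∃ a : ℝ, 0 < a ∧ x =O[𝓝[>] (0:ℝ)] fun ε => ρ ε ^ (-a)

/-- `x` is a ρ-negligible net: `x_ε = O(ρ_ε^{a})` as `ε → 0⁺` for every `a > 0`. -/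
def RNegl (ρ x : ℝ → ℝ) : Prop :=
  ∀ a : ℝ, 0 < a → x =O[𝓝[>] (0:ℝ)] fun ε => ρ ε ^ a

/-- The order relation of `ρ-ℝ̃` at the level of representatives:
`x ≤ y` iff `x_ε ≤ y_ε + z_ε` for `ε` small, for some ρ-negligible net `z`. -/
def RLe (ρ x y : ℝ → ℝ) : Prop :=
  ∃ z : ℝ → ℝ, RNegl ρ z ∧ ∀ᶠ ε in 𝓝[>] (0:ℝ), x ε ≤ y ε + z ε

/-- Invertibility in `ρ-ℝ̃` at the level of representatives. -/
def RInv (ρ x : ℝ → ℝ) : Prop :=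
  ∃ y : ℝ → ℝ, RMod ρ y ∧ RNegl ρ (x * y - 1)

/-- Strict order `x < y` of `ρ-ℝ̃`: some nonnegative invertible `r` satisfies `r ≤ y - x`. -/
def RLt (ρ x y : ℝ → ℝ) : Prop :=
  ∃ r : ℝ → ℝ, RMod ρ r ∧ RInv ρ r ∧ RLe ρ 0 r ∧ RLe ρ r (y - x)

theorem RNegl.zero (ρ : ℝ → ℝ) : RNegl ρ 0 :=
  fun a _ => isBigO_zero (fun ε => ρ ε ^ a) _

theorem RNegl.tendsto_zero {ρ z : ℝ → ℝ} (hρ0 : Tendsto ρ (𝓝[>] (0:ℝ)) (𝓝 0))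
    (hz : RNegl ρ z) : Tendsto z (𝓝[>] (0:ℝ)) (𝓝 0) := by
  have hz1 := hz 1 one_pos
  simp only [Real.rpow_one] at hz1
  exact hz1.trans_tendsto hρ0

-- `|x| ≤ δ/2 + z` with `z` negligible, and negligible nets tend to `0` because `ρ` does.
theorem tendsto_zero_of_forall_rle_abs_const {ρ x : ℝ → ℝ}
    (hρ0 : Tendsto ρ (𝓝[>] (0:ℝ)) (𝓝 0))
    (h : ∀ r : ℝ, 0 < r → RLe ρ (fun ε => |x ε|) (fun _ => r)) :
    Tendsto x (𝓝[>] (0:ℝ)) (𝓝 0) := by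
  refine Metric.tendsto_nhds.mpr fun δ hδ => ?_
  obtain ⟨z, hz, hle⟩ := h (δ / 2) (half_pos hδ)
  have hz_small : ∀ᶠ ε in 𝓝[>] (0:ℝ), z ε < δ / 2 :=
    (hz.tendsto_zero hρ0).eventually (gt_mem_nhds (half_pos hδ))
  filter_upwards [hle, hz_small] with ε hle hz_small
  rw [Real.dist_0_eq_abs]
  linarith

theorem rle_abs_const_of_tendsto_zero {ρ x : ℝ → ℝ} (hx : Tendsto x (𝓝[>] (0:ℝ)) (𝓝 0))
    {r : ℝ} (hr : 0 < r) : RLe ρ (fun ε => |x ε|) (fun _ => r) := by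
  refine ⟨0, RNegl.zero ρ, ?_⟩
  filter_upwards [Metric.tendsto_nhds.mp hx r hr] with ε hε
  rw [Real.dist_0_eq_abs] at hε
  simpa using hε.le

theorem infinitesimal_iff_tendsto_zero_general (ρ : ℝ → ℝ)
    (hρ0 : Tendsto ρ (𝓝[>] (0:ℝ)) (𝓝 0))
    (x : ℝ → ℝ) (hx : RMod ρ x) :
    (∀ r : ℝ, 0 < r → RLe ρ (fun ε => |x ε|) (fun _ => r)) ↔
      (∀ x' : ℝ → ℝ, RMod ρ x' → RNegl ρ (x - x') →
        Tendsto x' (𝓝[>] (0:ℝ)) (𝓝 0)) := by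
  constructor
  · intro h x' _ hdiff
    have hx0 := tendsto_zero_of_forall_rle_abs_const hρ0 h
    simpa using hx0.sub (hdiff.tendsto_zero hρ0)
  · intro h r hr
    exact rle_abs_const_of_tendsto_zero (h x hx (by simpa using RNegl.zero ρ)) hr

/-- `x ∈ ρ-ℝ̃` is infinitesimal (`|x| ≤ r` for every real `r > 0`) iff
every representative `(x'_ε)` of `x` satisfies `lim_{ε→0⁺} x'_ε = 0`. -/
theorem infinitesimal_iff_tendsto_zero (ρ : ℝ → ℝ)
    (hρpos : ∀ ε ∈ Set.Ioc (0:ℝ) 1, 0 < ρ ε)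
    (hρ0 : Tendsto ρ (𝓝[>] (0:ℝ)) (𝓝 0))
    (x : ℝ → ℝ) (hx : RMod ρ x) :
    (∀ r : ℝ, 0 < r → RLe ρ (fun ε => |x ε|) (fun _ => r)) ↔
      (∀ x' : ℝ → ℝ, RMod ρ x' → RNegl ρ (x - x') →
        Tendsto x' (𝓝[>] (0:ℝ)) (𝓝 0)) :=
  infinitesimal_iff_tendsto_zero_general ρ hρ0 x hx
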